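/- arXiv:1810.01298 — 4 statements merged into one kernel-verified Lean document; each statement's English description precedes it below -/
import Mathlib

section
/- Let n ≥ 1, let p₁,…,pₙ be integers, let S be the diagonal vector field S(x) = (p₁x₁,…,pₙxₙ) on ℂⁿ, and let X : ℂⁿ → ℂⁿ be an entire holomorphic map that is not identically zero. If there is λ ∈ ℂ such that [S,X](x) := DX(x)(S(x)) - S(X(x)) = λ·X(x) for all x ∈ ℂⁿ, then λ is an integer. -/
/-!
The flow of `S` is `φₜ(x) = (e^{p₁t}x₁, …, e^{pₙt}xₙ)`, which for integer `pⱼ` is periodic in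
complex time with period `2πi`. The relation `[S,X] = λX` says that along this flow every
component satisfies `d/dt X(φₜx)ᵢ = (λ + pᵢ) X(φₜx)ᵢ`, so `X(φₜx)ᵢ = e^{(λ+pᵢ)t} X(x)ᵢ`.
Taking `t = 2πi` at a point with `X(x)ᵢ ≠ 0` gives `e^{2πi(λ+pᵢ)} = 1`, i.e. `λ + pᵢ ∈ ℤ`.
-/

open Complex

lemma eq_exp_mul_of_hasDerivAt_mul {f : ℂ → ℂ} {a : ℂ} (hf : ∀ t, HasDerivAt f (a * f t) t)
    (t : ℂ) : f t = exp (a * t) * f 0 := by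
  have hderiv : ∀ u, HasDerivAt (fun u => exp (-a * u) * f u) 0 u := fun u => by
    have hexp : HasDerivAt (fun u => exp (-a * u)) (exp (-a * u) * -a) u := by
      simpa using ((hasDerivAt_id u).const_mul (-a)).cexp
    exact (hexp.mul (hf u)).congr_deriv (by ring)
  have hconst : exp (-a * t) * f t = exp (-a * 0) * f 0 :=
    is_const_of_deriv_eq_zero (fun u => (hderiv u).differentiableAt) (fun u => (hderiv u).deriv)
      t 0
  calc f t = exp (a * t) * (exp (-a * t) * f t) := by
          rw [← mul_assoc, ← exp_add, neg_mul, add_neg_cancel, exp_zero, one_mul]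
    _ = exp (a * t) * f 0 := by rw [hconst, mul_zero, exp_zero, one_mul]

lemma exists_int_eq_of_exp_mul_two_pi_I_eq_one {a : ℂ} (ha : exp (a * (2 * Real.pi * I)) = 1) :
    ∃ m : ℤ, a = m := by
  obtain ⟨m, hm⟩ := exp_eq_one_iff.mp ha
  exact ⟨m, mul_right_cancel₀ two_pi_I_ne_zero hm⟩

section DiagonalFlow

variable {ι : Type*}

noncomputable def diagonalFlow (q : ι → ℂ) (t : ℂ) (x : ι → ℂ) : ι → ℂ :=
  fun j => exp (q j * t) * x j

lemma hasDerivAt_diagonalFlow (q : ι → ℂ) (x : ι → ℂ) (t : ℂ) :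
    HasDerivAt (fun s => diagonalFlow q s x) (fun j => q j * diagonalFlow q t x j) t := by
  refine hasDerivAt_pi.mpr fun j => ?_
  have hexp : HasDerivAt (fun s => exp (q j * s)) (exp (q j * t) * q j) t := by
    simpa using ((hasDerivAt_id t).const_mul (q j)).cexp
  exact (hexp.mul_const (x j)).congr_deriv (by simp only [diagonalFlow]; ring)

lemma diagonalFlow_zero (q : ι → ℂ) (x : ι → ℂ) : diagonalFlow q 0 x = x := by
  ext j
  simp [diagonalFlow]

lemma diagonalFlow_two_pi_I (p : ι → ℤ) (x : ι → ℂ) :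
    diagonalFlow (fun j => (p j : ℂ)) (2 * Real.pi * I) x = x := by
  ext j
  simp only [diagonalFlow, exp_int_mul_two_pi_mul_I, one_mul]

variable [Fintype ι] {X : (ι → ℂ) → (ι → ℂ)} {q : ι → ℂ} {lam : ℂ}

lemma hasDerivAt_apply_diagonalFlow (hX : Differentiable ℂ X)
    (h : ∀ x, fderiv ℂ X x (fun j => q j * x j) - (fun j => q j * X x j) = lam • X x)
    (x : ι → ℂ) (i : ι) (t : ℂ) :
    HasDerivAt (fun s => X (diagonalFlow q s x) i) ((lam + q i) * X (diagonalFlow q t x) i) t := by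
  have hcomp := (hX _).hasFDerivAt.comp_hasDerivAt t (hasDerivAt_diagonalFlow q x t)
  refine (hasDerivAt_pi.mp hcomp i).congr_deriv ?_
  have hi := congrFun (h (diagonalFlow q t x)) i
  simp only [Pi.sub_apply, Pi.smul_apply, smul_eq_mul] at hi
  linear_combination hi

lemma apply_diagonalFlow_eq_exp_mul (hX : Differentiable ℂ X)
    (h : ∀ x, fderiv ℂ X x (fun j => q j * x j) - (fun j => q j * X x j) = lam • X x)
    (x : ι → ℂ) (i : ι) (t : ℂ) :
    X (diagonalFlow q t x) i = exp ((lam + q i) * t) * X x i := by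
  simpa only [diagonalFlow_zero] using
    eq_exp_mul_of_hasDerivAt_mul (hasDerivAt_apply_diagonalFlow hX h x i) t

end DiagonalFlow

theorem stmt3_general (n : ℕ) (p : Fin n → ℤ)
    (X : (Fin n → ℂ) → (Fin n → ℂ)) (hX : Differentiable ℂ X)
    (hX0 : ∃ x, X x ≠ 0) (lam : ℂ)
    (h : ∀ x : Fin n → ℂ,
      (fderiv ℂ X x (fun i => (p i : ℂ) * x i)) - (fun i => (p i : ℂ) * X x i)
        = lam • X x) :
    ∃ m : ℤ, lam = (m : ℂ) := by
  obtain ⟨x, hx⟩ := hX0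
  obtain ⟨i, hi⟩ := Function.ne_iff.mp hx
  have hperiod := apply_diagonalFlow_eq_exp_mul hX h x i (2 * Real.pi * I)
  rw [diagonalFlow_two_pi_I] at hperiod
  have hexp : exp ((lam + p i) * (2 * Real.pi * I)) = 1 :=
    mul_right_cancel₀ hi (by rw [one_mul]; exact hperiod.symm)
  obtain ⟨m, hm⟩ := exists_int_eq_of_exp_mul_two_pi_I_eq_one hexp
  exact ⟨m - p i, by push_cast; linear_combination hm⟩

/-- Proposition 2.1(a): if `X` is an entire holomorphic vector field on `ℂⁿ`,
not identically zero, and `[S,X] = λ·X` where `S(x) = (p₁x₁,…,pₙxₙ)` with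
integer `pᵢ`, then `λ` is an integer. -/
theorem stmt3 (n : ℕ) (hn : 1 ≤ n) (p : Fin n → ℤ)
    (X : (Fin n → ℂ) → (Fin n → ℂ)) (hX : Differentiable ℂ X)
    (hX0 : ∃ x, X x ≠ 0) (lam : ℂ)
    (h : ∀ x : Fin n → ℂ,
      (fderiv ℂ X x (fun i => (p i : ℂ) * x i)) - (fun i => (p i : ℂ) * X x i)
        = lam • X x) :
    ∃ m : ℤ, lam = (m : ℂ) :=
  stmt3_general n p X hX hX0 lam h
end

section
/- Let n ≥ 2 and d ≥ 1 be integers, and for i = 1,…,n set rᵢ = ∑_{j=i-1}^{n-1} d^j. Let k ∈ {1,…,n} and let b₁,…,bₙ be nonnegative integers satisfying b₁ + … + bₙ ≤ d and b₁·r₁ + … + bₙ·rₙ = r_k + dⁿ. Then k ≠ 1; moreover if k ≥ 2, the unique solution is b_{k-1} = d and bⱼ = 0 for all j ≠ k-1. -/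
open Finset
set_option maxHeartbeats 1000000

private lemma geo_aux (x : ℤ) {a n : ℕ} (h : a ≤ n) :
    (∑ i ∈ Finset.Ico a n, x ^ i) * (x - 1) = x ^ n - x ^ a := by
  have h1 := geom_sum_mul x n
  have h2 := geom_sum_mul x a
  have h3 := Finset.sum_range_add_sum_Ico (fun i => x ^ i) h
  linear_combination h1 - h2 + (x - 1) * h3

/-- Claim 4.6: with `rᵢ = ∑_{j=i-1}^{n-1} d^j`, the system
`∑ bⱼ·rⱼ = r_k + dⁿ`, `∑ bⱼ ≤ d`, `bⱼ ∈ ℤ≥0` (sums over `j = 1,…,n`)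
forces `k ≠ 1`, and its unique solution is `b_{k-1} = d`, `bⱼ = 0` otherwise. -/
theorem stmt7 (n d : ℕ) (hn : 2 ≤ n) (hd : 1 ≤ d)
    (r : ℕ → ℕ) (hr : ∀ i, r i = ∑ j ∈ Finset.Ico (i - 1) n, d ^ j)
    (k : ℕ) (hk : k ∈ Finset.Icc 1 n)
    (b : ℕ → ℕ)
    (hb1 : ∑ j ∈ Finset.Icc 1 n, b j ≤ d)
    (hb2 : ∑ j ∈ Finset.Icc 1 n, b j * r j = r k + d ^ n) :
    k ≠ 1 ∧ b (k - 1) = d ∧ ∀ j ∈ Finset.Icc 1 n, j ≠ k - 1 → b j = 0 := by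
  rw [Finset.mem_Icc] at hk
  obtain ⟨hk1, hkn⟩ := hk
  by_cases hd1 : d = 1
  · -- the case d = 1
    subst hd1
    have hr1 : ∀ j, r j = n - (j - 1) := by
      intro j; rw [hr]; simp
    have hSne : ∑ j ∈ Icc 1 n, b j ≠ 0 := by
      intro h0
      have hz : ∀ j ∈ Icc 1 n, b j = 0 := by
        rw [← Finset.sum_eq_zero_iff]; exact h0
      have h1 : ∑ j ∈ Icc 1 n, b j * r j = 0 :=
        Finset.sum_eq_zero (fun j hj => by rw [hz j hj, zero_mul])
      rw [hb2] at h1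
      simp [hr1] at h1
    obtain ⟨J, hJmem, hJne⟩ := Finset.exists_ne_zero_of_sum_ne_zero hSne
    have hJ' := hJmem
    rw [Finset.mem_Icc] at hJ'
    have hsplit := Finset.add_sum_erase _ b hJmem
    have hbJ : b J = 1 := by omega
    have hrest : ∑ j ∈ (Icc 1 n).erase J, b j = 0 := by omega
    have hz : ∀ j ∈ (Icc 1 n).erase J, b j = 0 := by
      rw [← Finset.sum_eq_zero_iff]; exact hrest
    have hsum : ∑ j ∈ Icc 1 n, b j * r j = b J * r J := by
      rw [← Finset.add_sum_erase _ _ hJmem]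
      rw [Finset.sum_eq_zero (fun j hj => by rw [hz j hj, zero_mul])]
      omega
    rw [hsum, hbJ, one_mul, hr1, hr1, one_pow] at hb2
    have hJk : J = k - 1 ∧ 2 ≤ k := by omega
    refine ⟨by omega, ?_, ?_⟩
    · rw [← hJk.1]; omega
    · intro j hj hjne
      by_cases hjJ : j = J
      · exact absurd (hjJ.trans hJk.1) hjne
      · exact hz j (Finset.mem_erase.mpr ⟨hjJ, hj⟩)
  · -- the case d ≥ 2
    have hd2 : 2 ≤ d := by omega
    have hrz : ∀ j, 1 ≤ j → j ≤ n → (r j : ℤ) * ((d:ℤ) - 1) = (d:ℤ)^n - (d:ℤ)^(j-1) := by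
      intro j hj1 hjn
      rw [hr]
      push_cast
      exact geo_aux (d:ℤ) (by omega)
    have hbz : (∑ j ∈ Icc 1 n, (b j : ℤ) * (r j : ℤ)) = (r k : ℤ) + (d:ℤ)^n := by
      exact_mod_cast hb2
    have step : (∑ j ∈ Icc 1 n, (b j:ℤ) * (r j:ℤ)) * ((d:ℤ)-1)
        = (∑ j ∈ Icc 1 n, (b j:ℤ)) * (d:ℤ)^n - ∑ j ∈ Icc 1 n, (b j:ℤ) * (d:ℤ)^(j-1) := by
      rw [Finset.sum_mul, Finset.sum_mul, ← Finset.sum_sub_distrib]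
      apply Finset.sum_congr rfl
      intro j hj
      rw [Finset.mem_Icc] at hj
      linear_combination (b j : ℤ) * hrz j hj.1 hj.2
    have hkz := hrz k hk1 hkn
    have hZ : (∑ j ∈ Icc 1 n, (b j:ℤ) * (d:ℤ)^(j-1)) + (d:ℤ)^(n+1)
        = (∑ j ∈ Icc 1 n, (b j:ℤ)) * (d:ℤ)^n + (d:ℤ)^(k-1) := by
      linear_combination step - hkz - ((d:ℤ)-1) * hbz
    have hid : (∑ j ∈ Icc 1 n, b j * d ^ (j-1)) + d^(n+1)
        = (∑ j ∈ Icc 1 n, b j) * d^n + d^(k-1) := by exact_mod_cast hZ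
    set S := ∑ j ∈ Icc 1 n, b j with hS
    set P := ∑ j ∈ Icc 1 n, b j * d ^ (j - 1) with hP
    have e1 : d ^ (n+1) = d * d ^ n := by ring
    have e2 : d ^ n = d * d ^ (n-1) := by
      conv_lhs => rw [show n = (n-1) + 1 by omega]
      ring
    have e3 : d ^ (k-1) ≤ d ^ (n-1) := Nat.pow_le_pow_right hd (by omega)
    have e4 : 1 ≤ d ^ (n-1) := Nat.one_le_pow _ _ (by omega)
    rw [e1, e2] at hid
    have hSP : S ≤ P := by
      rw [hS, hP]
      apply Finset.sum_le_sum
      intro j hj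
      have h1 : 1 ≤ d ^ (j-1) := Nat.one_le_pow _ _ (by omega)
      nlinarith
    have hSd : S = d := by
      by_contra hne
      have hSlt : S + 1 ≤ d := by omega
      have h1 : (S + 1) * (d * d^(n-1)) ≤ d * (d * d^(n-1)) :=
        Nat.mul_le_mul_right _ hSlt
      have h2 : 2 * d^(n-1) ≤ d * d^(n-1) := Nat.mul_le_mul_right _ hd2
      nlinarith [hid, h1, h2, e3, e4]
    have hPk : P = d^(k-1) := by
      rw [hSd] at hid
      linarith [hid]
    have hk2 : 2 ≤ k := by
      by_contra h
      have hkk : k = 1 := by omega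
      subst hkk
      norm_num at hPk
      omega
    have hzge : ∀ J, J ∈ Icc 1 n → k ≤ J → b J = 0 := by
      intro J hJmem hkJ
      by_contra hbJ
      have hJ' := hJmem; rw [Finset.mem_Icc] at hJ'
      have hsplitS : b J + ∑ j ∈ (Icc 1 n).erase J, b j = S := by
        rw [hS]; exact Finset.add_sum_erase _ b hJmem
      have hsplitP : b J * d^(J-1) + ∑ j ∈ (Icc 1 n).erase J, b j * d^(j-1) = P := by
        rw [hP]; exact Finset.add_sum_erase _ (fun j => b j * d ^ (j - 1)) hJmem
      have hEle : ∑ j ∈ (Icc 1 n).erase J, b j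
          ≤ ∑ j ∈ (Icc 1 n).erase J, b j * d^(j-1) := by
        apply Finset.sum_le_sum
        intro j hj
        have h1 : 1 ≤ d ^ (j-1) := Nat.one_le_pow _ _ (by omega)
        nlinarith
      have hdk : d^(k-1) ≤ d^(J-1) := Nat.pow_le_pow_right hd (by omega)
      have hmul : b J * d^(k-1) ≤ b J * d^(J-1) := Nat.mul_le_mul_left _ hdk
      have h1 : b J * d^(k-1) + ∑ j ∈ (Icc 1 n).erase J, b j ≤ P := by
        linarith [hsplitP, hmul, hEle]
      have h2 : d^(k-1) ≤ b J * d^(k-1) := Nat.le_mul_of_pos_left _ (by omega)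
      have hEb0 : ∑ j ∈ (Icc 1 n).erase J, b j = 0 :=
        Nat.eq_zero_of_le_zero (by linarith [hPk])
      have hbJd : b J = d := by omega
      have h3 : 2 * d^(k-1) ≤ d * d^(k-1) := Nat.mul_le_mul_right _ hd2
      have h4 : 1 ≤ d^(k-1) := Nat.one_le_pow _ _ (by omega)
      rw [hbJd] at h1
      linarith [hPk]
    have hzlt : ∀ J, J ∈ Icc 1 n → J < k - 1 → b J = 0 := by
      intro J hJmem hJk
      by_contra hbJ
      have hJ' := hJmem; rw [Finset.mem_Icc] at hJ'
      have hsplitS : b J + ∑ j ∈ (Icc 1 n).erase J, b j = S := by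
        rw [hS]; exact Finset.add_sum_erase _ b hJmem
      have hsplitP : b J * d^(J-1) + ∑ j ∈ (Icc 1 n).erase J, b j * d^(j-1) = P := by
        rw [hP]; exact Finset.add_sum_erase _ (fun j => b j * d ^ (j - 1)) hJmem
      have hEp : ∑ j ∈ (Icc 1 n).erase J, b j * d^(j-1)
          ≤ (∑ j ∈ (Icc 1 n).erase J, b j) * d^(k-2) := by
        rw [Finset.sum_mul]
        apply Finset.sum_le_sum
        intro j hj
        have hj2 := Finset.mem_of_mem_erase hj
        have hj3 := hj2; rw [Finset.mem_Icc] at hj3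
        by_cases hc : j ≤ k - 1
        · exact Nat.mul_le_mul_left _ (Nat.pow_le_pow_right hd (by omega))
        · rw [hzge j hj2 (by omega)]; simp
      have hlt : d^(J-1) < d^(k-2) := Nat.pow_lt_pow_right hd2 (by omega)
      have hml : b J * d^(J-1) < b J * d^(k-2) :=
        mul_lt_mul_of_pos_left hlt (by omega)
      have hKK : d^(k-1) = d * d^(k-2) := by
        conv_lhs => rw [show k - 1 = (k-2) + 1 by omega]
        ring
      have hfin : (b J + ∑ j ∈ (Icc 1 n).erase J, b j) * d^(k-2) = d * d^(k-2) := by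
        rw [hsplitS, hSd]
      nlinarith [hsplitP, hEp, hml, hPk, hKK, hfin]
    have hkm1 : k - 1 ∈ Icc 1 n := by rw [Finset.mem_Icc]; omega
    have hall : ∀ j ∈ Icc 1 n, j ≠ k - 1 → b j = 0 := by
      intro j hj hjne
      have hj' := hj; rw [Finset.mem_Icc] at hj'
      rcases lt_or_ge j (k-1) with h | h
      · exact hzlt j hj h
      · exact hzge j hj (by omega)
    refine ⟨by omega, ?_, hall⟩
    have hsplit := Finset.add_sum_erase _ b hkm1
    have hzero : ∑ j ∈ (Icc 1 n).erase (k-1), b j = 0 :=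
      Finset.sum_eq_zero (fun j hj =>
        hall j (Finset.mem_of_mem_erase hj) (Finset.ne_of_mem_erase hj))
    rw [← hS] at hsplit
    omega
end

section
/- Let n ≥ 2 and d ≥ 1 be integers and let τ₁,…,τₙ be nonzero complex numbers. Define Y : ℂⁿ → ℂⁿ by Y₁(x) = -τ₁·x₁·xₙ^d and Yₖ(x) = τₖ·xₖ·xₙ^d + x_{k-1}^d for k = 2,…,n. Then Y(x) = 0 if and only if x = 0; that is, the origin is the only common zero of Y₁,…,Yₙ. -/
/-- The vector field `Y = -τ₁x₁xₙ^d ∂/∂x₁ + ∑_{k=2}^n (τₖxₖxₙ^d + x_{k-1}^d) ∂/∂xₖ`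
with all `τₖ ≠ 0` has the origin as its only singularity (proof of Corollary 4.5). -/
theorem stmt8 (n d : ℕ) (hn : 2 ≤ n) (hd : 1 ≤ d)
    (τ : Fin n → ℂ) (hτ : ∀ i, τ i ≠ 0)
    (Y : (Fin n → ℂ) → (Fin n → ℂ))
    (hY : ∀ (x : Fin n → ℂ) (k : Fin n),
      Y x k =
        if (k : ℕ) = 0 then
          -τ k * x k * (x ⟨n - 1, by omega⟩) ^ d
        else
          τ k * x k * (x ⟨n - 1, by omega⟩) ^ d +
            (x ⟨(k : ℕ) - 1, Nat.lt_of_le_of_lt (Nat.sub_le _ _) k.isLt⟩) ^ d) :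
    ∀ x : Fin n → ℂ, Y x = 0 ↔ x = 0 := by
  have hd0 : d ≠ 0 := by omega
  intro x
  constructor
  · intro h
    have hk0 : ∀ k : Fin n, Y x k = 0 := fun k => congrFun h k
    have key : ∀ k : ℕ, (hk : k < n) → x ⟨k, hk⟩ = 0 := by
      by_cases hlast : x ⟨n - 1, by omega⟩ = 0
      · intro k hk
        by_cases heq : k = n - 1
        · have : (⟨k, hk⟩ : Fin n) = ⟨n - 1, by omega⟩ := by
            apply Fin.ext; simpa using heq
          rw [this]; exact hlast
        · -- k + 1 < n, use equation at index k+1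
          have hk1 : k + 1 < n := by omega
          have := hk0 ⟨k + 1, hk1⟩
          rw [hY x ⟨k + 1, hk1⟩] at this
          simp only [Fin.val_mk, Nat.succ_ne_zero, if_false, Nat.add_sub_cancel] at this
          rw [hlast] at this
          have hzp : (0 : ℂ) ^ d = 0 := zero_pow hd0
          rw [hzp, mul_zero, zero_add] at this
          exact pow_eq_zero_iff hd0 |>.mp this
      · intro k hk
        induction k with
        | zero =>
          have := hk0 ⟨0, by omega⟩
          rw [hY x ⟨0, by omega⟩] at this
          simp only [Fin.val_mk, if_true, if_pos rfl] at this
          have hpow : (x ⟨n - 1, by omega⟩) ^ d ≠ 0 := pow_ne_zero _ hlast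
          have := mul_eq_zero.mp this
          rcases this with h1 | h2
          · rcases mul_eq_zero.mp h1 with h3 | h4
            · exact absurd (neg_eq_zero.mp h3) (hτ _)
            · exact h4
          · exact absurd h2 hpow
        | succ m ih =>
          have hm : m < n := by omega
          have hxm : x ⟨m, hm⟩ = 0 := ih hm
          have := hk0 ⟨m + 1, hk⟩
          rw [hY x ⟨m + 1, hk⟩] at this
          simp only [Fin.val_mk, Nat.succ_ne_zero, if_false, Nat.add_sub_cancel] at this
          rw [hxm, zero_pow hd0, add_zero] at this
          have hpow : (x ⟨n - 1, by omega⟩) ^ d ≠ 0 := pow_ne_zero _ hlast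
          rcases mul_eq_zero.mp this with h1 | h2
          · rcases mul_eq_zero.mp h1 with h3 | h4
            · exact absurd h3 (hτ _)
            · exact h4
          · exact absurd h2 hpow
    funext k
    have := key k.1 k.2
    simpa using this
  · intro h
    subst h
    funext k
    rw [hY]
    simp [zero_pow hd0]
end

section
/- Let d ≥ 2, and let m, p be positive integers with gcd(p, m) = 1, p > m·(d² + d + 1), and p dividing m·d·(d² + d + 1). Then p does not divide d³·(d³ + d² + d + 1). -/
/-- Divisibility argument in case (1) of the proof of Theorem B.2: if
`gcd(p,m) = 1`, `p > m(d²+d+1)` and `p ∣ md(d²+d+1)`, then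
`p ∤ d³(d³+d²+d+1)`. -/
theorem stmt14 (d m p : ℕ) (hd : 2 ≤ d) (hm : 0 < m) (hp : 0 < p)
    (hgcd : Nat.gcd p m = 1) (hlt : m * (d ^ 2 + d + 1) < p)
    (hdvd : p ∣ m * d * (d ^ 2 + d + 1)) :
    ¬ p ∣ d ^ 3 * (d ^ 3 + d ^ 2 + d + 1) := by
  intro hB
  set c := d ^ 2 + d + 1 with hc
  set B := d ^ 3 * (d ^ 3 + d ^ 2 + d + 1) with hBdef
  -- p coprime to m, so p ∣ d * c
  have hpm : Nat.Coprime p m := hgcd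
  have hA : p ∣ d * c := by
    have : p ∣ m * (d * c) := by
      have := hdvd; rwa [mul_assoc] at this
    exact (Nat.Coprime.dvd_of_dvd_mul_left hpm this)
  -- c is coprime to B
  have hcpos : 7 ≤ c := by rw [hc]; nlinarith
  have hcd : Nat.Coprime c d := by
    have h1 : c % d = 1 := by
      have e : c = 1 + d * (d + 1) := by rw [hc]; ring
      rw [e, Nat.add_mul_mod_self_left, Nat.one_mod_eq_one.mpr (by omega)]
    rw [Nat.Coprime, Nat.gcd_comm, Nat.gcd_rec, h1, Nat.gcd_one_left]
  have hc1 : Nat.Coprime c (d ^ 3 + d ^ 2 + d + 1) := by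
    have e : d ^ 3 + d ^ 2 + d + 1 = c * d + 1 := by rw [hc]; ring
    rw [Nat.Coprime, e, Nat.gcd_rec, Nat.mul_add_mod,
      Nat.one_mod_eq_one.mpr (by omega), Nat.gcd_one_left]
  have hcB : Nat.Coprime c B := by
    rw [hBdef]
    exact Nat.Coprime.mul_right (Nat.Coprime.pow_right 3 hcd) hc1
  -- hence gcd (d*c) B = gcd d B ∣ d
  have hgB : Nat.gcd (d * c) B = Nat.gcd d B :=
    Nat.Coprime.gcd_mul_right_cancel d hcB
  have hpd : p ∣ d := by
    have h1 : p ∣ Nat.gcd (d * c) B := Nat.dvd_gcd hA hB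
    rw [hgB] at h1
    exact h1.trans (Nat.gcd_dvd_left d B)
  have : p ≤ d := Nat.le_of_dvd (by omega) hpd
  have : c ≤ m * c := Nat.le_mul_of_pos_left c hm
  nlinarith [sq_nonneg d]
end
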